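/- arXiv:math/0603028 — 8 statements merged into one kernel-verified Lean document; each statement's English description precedes it below -/
import Mathlib

section
/- Let m < 0 and let f be a non-constant solution of f''' + ((m+1)/2) f f'' - m (f')² = 0 on an interval I. If t₀ ∈ I and f''(t₀) ≤ 0, then f''(t) < 0 for all t ∈ I with t > t₀. -/
open Real Set Filter Topology

/-!
Since `m (f')² ≤ 0`, the equation gives `f''' ≤ -((m+1)/2) f f''`, a linear differential
inequality for `f''` with a locally bounded coefficient; a barrier argument keeps `f''`
nonpositive after `t₀`. If `f''` vanished at some `t > t₀`, then `t` would be a maximum of `f''`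
from the left, so `f'''(t) ≥ 0`, whereas the equation gives `f'''(t) = m f'(t)² ≤ 0`; as `m < 0`,
`f'(t) = 0`. Now `(f', f'')` vanishes at `t` and solves the linear system
`u' = (f'', m f' · f' - ((m+1)/2) f · f'')` with locally bounded coefficients `f, f'`, so by
Grönwall `f' ≡ 0` and `f` is constant.
-/

theorem nonpos_of_deriv_right_le_mul_of_pos {g g' : ℝ → ℝ} {K a b : ℝ}
    (hg : ContinuousOn g (Icc a b)) (hg' : ∀ x ∈ Ico a b, HasDerivWithinAt g (g' x) (Ici x) x)
    (ha : g a ≤ 0) (bound : ∀ x ∈ Ico a b, 0 < g x → g' x ≤ K * g x) :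
    ∀ x ∈ Icc a b, g x ≤ 0 := by
  intro x hx
  refine le_of_forall_pos_le_add fun δ hδ => ?_
  -- the barrier `δ e^{L (y - x)}` outgrows `K g` wherever `g` touches it
  set L := |K| + 1
  have hB (y : ℝ) :
      HasDerivAt (fun y => δ * exp (L * (y - x))) (L * (δ * exp (L * (y - x)))) y :=
    ((((hasDerivAt_id' y).sub_const x).const_mul L).exp.const_mul δ).congr_deriv (by ring)
  have key := image_le_of_deriv_right_lt_deriv_boundary hg hg' (ha.trans (by positivity)) hB
    (fun y _ hy => ?_) hx
  · simpa using key
  · have hpos : 0 < g y := hy ▸ by positivity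
    calc g' y ≤ K * g y := bound y ‹_› hpos
      _ < L * g y := by gcongr; exact (le_abs_self K).trans_lt (lt_add_one _)
      _ = _ := by rw [hy]

section NormedSpace

variable {E : Type*} [NormedAddCommGroup E] [NormedSpace ℝ E] {J : Set ℝ}

theorem eq_zero_of_abs_deriv_le_mul_abs_self_of_eq_zero_left {u u' : ℝ → E} {K a b : ℝ}
    (hu : ContinuousOn u (Icc a b)) (hu' : ∀ x ∈ Ioc a b, HasDerivWithinAt u (u' x) (Iic x) x)
    (hb : u b = 0) (bound : ∀ x ∈ Ioc a b, ‖u' x‖ ≤ K * ‖u x‖) :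
    ∀ x ∈ Icc a b, u x = 0 := by
  have hIcc : MapsTo Neg.neg (Icc (-b) (-a)) (Icc a b) :=
    fun x hx => ⟨le_neg.mp hx.2, neg_le.mp hx.1⟩
  have hIco : MapsTo Neg.neg (Ico (-b) (-a)) (Ioc a b) :=
    fun x hx => ⟨lt_neg.mp hx.2, neg_le.mp hx.1⟩
  have hrefl := eq_zero_of_abs_deriv_le_mul_abs_self_of_eq_zero_right (K := K)
    (f := u ∘ Neg.neg) (f' := fun x => -u' (-x)) (hu.comp continuousOn_neg hIcc)
    (fun x hx => by
      have := (hu' (-x) (hIco hx)).scomp x (hasDerivAt_neg x).hasDerivWithinAt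
        fun y (hy : x ≤ y) => neg_le_neg hy
      rwa [neg_one_smul] at this)
    (by simpa using hb) (fun x hx => by simpa using bound (-x) (hIco hx))
  intro x hx
  simpa using hrefl (-x) ⟨neg_le_neg hx.2, neg_le_neg hx.1⟩

theorem Set.OrdConnected.hasDerivWithinAt_Ici (hJ : J.OrdConnected) {g : ℝ → E} {g' : E}
    {x y : ℝ} (hx : x ∈ J) (hy : y ∈ J) (hxy : x < y) (h : HasDerivWithinAt g g' J x) :
    HasDerivWithinAt g g' (Ici x) x :=
  h.mono_of_mem_nhdsWithin (mem_of_superset (Icc_mem_nhdsGE hxy) (hJ.out hx hy))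

theorem Set.OrdConnected.hasDerivWithinAt_Iic (hJ : J.OrdConnected) {g : ℝ → E} {g' : E}
    {x y : ℝ} (hx : x ∈ J) (hy : y ∈ J) (hxy : y < x) (h : HasDerivWithinAt g g' J x) :
    HasDerivWithinAt g g' (Iic x) x :=
  h.mono_of_mem_nhdsWithin (mem_of_superset (Icc_mem_nhdsLE hxy) (hJ.out hy hx))

theorem Set.OrdConnected.eqOn_zero_of_norm_deriv_le (hJ : J.OrdConnected) {u u' : ℝ → E}
    (hu : ∀ t ∈ J, HasDerivWithinAt u (u' t) J t)
    (bound : ∀ a ∈ J, ∀ b ∈ J, ∃ K, ∀ t ∈ Icc a b, ‖u' t‖ ≤ K * ‖u t‖)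
    {t₀ : ℝ} (ht₀ : t₀ ∈ J) (h₀ : u t₀ = 0) : EqOn u 0 J := by
  intro t ht
  rcases le_total t₀ t with hle | hle
  · have hsub := hJ.out ht₀ ht
    obtain ⟨K, hK⟩ := bound t₀ ht₀ t ht
    refine eq_zero_of_abs_deriv_le_mul_abs_self_of_eq_zero_right
      ((HasDerivWithinAt.continuousOn hu).mono hsub) (fun x hx => ?_) h₀
      (fun x hx => hK x (Ico_subset_Icc_self hx)) t ⟨hle, le_rfl⟩
    have hxJ := hsub (Ico_subset_Icc_self hx)
    exact hJ.hasDerivWithinAt_Ici hxJ ht hx.2 (hu x hxJ)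
  · have hsub := hJ.out ht ht₀
    obtain ⟨K, hK⟩ := bound t ht t₀ ht₀
    refine eq_zero_of_abs_deriv_le_mul_abs_self_of_eq_zero_left
      ((HasDerivWithinAt.continuousOn hu).mono hsub) (fun x hx => ?_) h₀
      (fun x hx => hK x (Ioc_subset_Icc_self hx)) t ⟨le_rfl, hle⟩
    have hxJ := hsub (Ioc_subset_Icc_self hx)
    exact hJ.hasDerivWithinAt_Iic hxJ ht hx.1 (hu x hxJ)

end NormedSpace

theorem HasDerivWithinAt.nonneg_of_le_of_Ioo {g : ℝ → ℝ} {g' a b : ℝ} (hab : a < b)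
    (hg : HasDerivWithinAt g g' (Ioo a b) b) (hle : ∀ x ∈ Ioo a b, g x ≤ g b) : 0 ≤ g' := by
  rw [hasDerivWithinAt_iff_tendsto_slope' (fun h => h.2.false),
    nhdsWithin_Ioo_eq_nhdsLT hab] at hg
  refine ge_of_tendsto hg ?_
  filter_upwards [Ioo_mem_nhdsLT hab] with x hx
  rw [slope_def_field]
  exact div_nonneg_of_nonpos (by linarith [hle x hx]) (by linarith [hx.2])

-- `(A, B, C, D)` plays `(f, f', f'', f''')` at one point; `ℝ × ℝ` carries the sup norm.
theorem norm_falknerSkan_rhs_le {m A B C D M M' : ℝ}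
    (hode : D + (m + 1) / 2 * A * C - m * B ^ 2 = 0)
    (hA : |A| ≤ M) (hB : |B| ≤ M') :
    ‖(C, D)‖ ≤ (1 + (|m + 1| / 2 * M + |m| * M')) * ‖(B, C)‖ := by
  set N := ‖(B, C)‖
  have hBN : |B| ≤ N := norm_fst_le (B, C)
  have hCN : |C| ≤ N := norm_snd_le (B, C)
  have hM : 0 ≤ M := (abs_nonneg _).trans hA
  have hM' : 0 ≤ M' := (abs_nonneg _).trans hB
  have hD : |D| ≤ (|m + 1| / 2 * M + |m| * M') * N :=
    calc |D| = |m * B * B - (m + 1) / 2 * A * C| := by congr 1; linear_combination hode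
      _ ≤ |m * B * B| + |(m + 1) / 2 * A * C| := abs_sub _ _
      _ = |m| * |B| * |B| + |m + 1| / 2 * |A| * |C| := by simp only [abs_mul, abs_div, abs_two]
      _ ≤ |m| * M' * N + |m + 1| / 2 * M * N := by gcongr
      _ = _ := by ring
  have hN : 0 ≤ N := norm_nonneg _
  have hL : 0 ≤ |m + 1| / 2 * M + |m| * M' := by positivity
  rw [Prod.norm_mk, Real.norm_eq_abs, Real.norm_eq_abs]
  exact max_le (by nlinarith) (by nlinarith)

section FalknerSkan

variable {m : ℝ} {I : Set ℝ} {f f' f'' f''' : ℝ → ℝ}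

theorem deriv2_nonpos_of_le_of_deriv2_nonpos (hm : m ≤ 0) (hI : I.OrdConnected)
    (hf : ∀ t ∈ I, HasDerivWithinAt f (f' t) I t)
    (hf'' : ∀ t ∈ I, HasDerivWithinAt f'' (f''' t) I t)
    (hode : ∀ t ∈ I, f''' t + (m + 1) / 2 * f t * f'' t - m * (f' t) ^ 2 = 0)
    {t₀ t : ℝ} (ht₀ : t₀ ∈ I) (ht : t ∈ I) (h : f'' t₀ ≤ 0) (hle : t₀ ≤ t) : f'' t ≤ 0 := by
  have hsub := hI.out ht₀ ht
  have hcoef_cont : ContinuousOn (fun τ => (m + 1) / 2 * f τ) (Icc t₀ t) :=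
    continuousOn_const.mul ((HasDerivWithinAt.continuousOn hf).mono hsub)
  obtain ⟨K, hK⟩ := isCompact_Icc.exists_bound_of_continuousOn hcoef_cont
  refine nonpos_of_deriv_right_le_mul_of_pos (g' := f''') (K := K)
    ((HasDerivWithinAt.continuousOn hf'').mono hsub) (fun x hx => ?_) h (fun x hx hpos => ?_)
    t ⟨hle, le_rfl⟩
  · have hxI := hsub (Ico_subset_Icc_self hx)
    exact hI.hasDerivWithinAt_Ici hxI ht hx.2 (hf'' x hxI)
  · have hcoef : -((m + 1) / 2 * f x) ≤ K :=
      (neg_le_abs _).trans (hK x (Ico_subset_Icc_self hx))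
    have := hode x (hsub (Ico_subset_Icc_self hx))
    nlinarith [mul_le_mul_of_nonneg_right hcoef hpos.le,
      mul_nonpos_of_nonpos_of_nonneg hm (sq_nonneg (f' x))]

theorem deriv_eq_zero_of_deriv2_eq_zero_of_le (hm : m < 0) (hI : I.OrdConnected)
    (hf'' : ∀ t ∈ I, HasDerivWithinAt f'' (f''' t) I t)
    (hode : ∀ t ∈ I, f''' t + (m + 1) / 2 * f t * f'' t - m * (f' t) ^ 2 = 0)
    {a b : ℝ} (ha : a ∈ I) (hb : b ∈ I) (hab : a < b) (hle : ∀ t ∈ Ioo a b, f'' t ≤ f'' b)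
    (hzero : f'' b = 0) : f' b = 0 := by
  have h3 : 0 ≤ f''' b :=
    ((hf'' b hb).mono (Ioo_subset_Icc_self.trans (hI.out ha hb))).nonneg_of_le_of_Ioo hab hle
  have hode_b := hode b hb
  rw [hzero] at hode_b
  have hsq : f' b ^ 2 ≤ 0 := by nlinarith
  exact pow_eq_zero_iff two_ne_zero |>.mp (le_antisymm hsq (sq_nonneg _))

theorem deriv_eqOn_zero_of_deriv_eq_zero_of_deriv2_eq_zero (hI : I.OrdConnected)
    (hf : ∀ t ∈ I, HasDerivWithinAt f (f' t) I t)
    (hf' : ∀ t ∈ I, HasDerivWithinAt f' (f'' t) I t)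
    (hf'' : ∀ t ∈ I, HasDerivWithinAt f'' (f''' t) I t)
    (hode : ∀ t ∈ I, f''' t + (m + 1) / 2 * f t * f'' t - m * (f' t) ^ 2 = 0)
    {t₀ : ℝ} (ht₀ : t₀ ∈ I) (h₁ : f' t₀ = 0) (h₂ : f'' t₀ = 0) : EqOn f' 0 I := by
  have hzero := hI.eqOn_zero_of_norm_deriv_le (u := fun t => (f' t, f'' t))
    (fun t ht => (hf' t ht).prodMk (hf'' t ht)) (fun a ha b hb => ?_) ht₀ (by simp [h₁, h₂])
  · exact fun t ht => congrArg Prod.fst (hzero ht)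
  have hsub := hI.out ha hb
  obtain ⟨M, hM⟩ := isCompact_Icc.exists_bound_of_continuousOn
    ((HasDerivWithinAt.continuousOn hf).mono hsub)
  obtain ⟨M', hM'⟩ := isCompact_Icc.exists_bound_of_continuousOn
    ((HasDerivWithinAt.continuousOn hf').mono hsub)
  exact ⟨_, fun t ht => norm_falknerSkan_rhs_le (hode t (hsub ht)) (hM t ht) (hM' t ht)⟩

end FalknerSkan

theorem stmt2 (m : ℝ) (hm : m < 0) (I : Set ℝ) (hI : I.OrdConnected)
    (f f' f'' f''' : ℝ → ℝ)
    (hf : ∀ t ∈ I, HasDerivWithinAt f (f' t) I t)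
    (hf' : ∀ t ∈ I, HasDerivWithinAt f' (f'' t) I t)
    (hf'' : ∀ t ∈ I, HasDerivWithinAt f'' (f''' t) I t)
    (hode : ∀ t ∈ I,
      f''' t + (m + 1) / 2 * f t * f'' t - m * (f' t) ^ 2 = 0)
    (hnc : ¬ ∀ x ∈ I, ∀ y ∈ I, f x = f y)
    (t₀ : ℝ) (ht₀ : t₀ ∈ I) (h : f'' t₀ ≤ 0) :
    ∀ t ∈ I, t₀ < t → f'' t < 0 := by
  intro t ht hlt
  have hnonpos : ∀ τ ∈ I, t₀ ≤ τ → f'' τ ≤ 0 :=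
    fun τ hτ => deriv2_nonpos_of_le_of_deriv2_nonpos hm.le hI hf hf'' hode ht₀ hτ h
  refine (hnonpos t ht hlt.le).lt_of_ne fun hzero => hnc ?_
  have h₁ : f' t = 0 := deriv_eq_zero_of_deriv2_eq_zero_of_le hm hI hf'' hode ht₀ ht hlt
    (fun τ hτ => hzero ▸ hnonpos τ (hI.out ht₀ ht (Ioo_subset_Icc_self hτ)) hτ.1.le) hzero
  have hf'_zero := deriv_eqOn_zero_of_deriv_eq_zero_of_deriv2_eq_zero hI hf hf' hf'' hode ht h₁ hzero
  intro x hx y hy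
  have := hI.convex.norm_image_sub_le_of_norm_hasDerivWithin_le (C := 0) hf
    (fun z hz => by simp [hf'_zero hz]) hy hx
  rw [zero_mul, norm_le_zero_iff, sub_eq_zero] at this
  exact this
end

section
/- Let m > 0 and let f be a non-constant solution of f''' + ((m+1)/2) f f'' - m (f')² = 0 on an interval I. If t₀ ∈ I and f''(t₀) ≥ 0, then f''(t) > 0 for all t ∈ I with t > t₀. -/
/-!
If `P` is a primitive of `(m + 1) / 2 * f`, the ODE says that `f'' * exp P` has derivative
`m * f' ^ 2 * exp P ≥ 0`, so it is nondecreasing. If `f'' t₀ ≥ 0 ≥ f'' t` with `t₀ < t`, it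
therefore vanishes identically on `[t₀, t]`, and so does its derivative; hence `f'` and `f''`
vanish at `t₀`. Then `(f, f', f'')` passes through an equilibrium `(c, 0, 0)` of the
first-order system, whose vector field is `C¹`, so by uniqueness `f` is constant.
-/

open Real Set Filter Topology

theorem ODE_solution_unique_of_contDiff_of_mem_Icc {E : Type*} [NormedAddCommGroup E]
    [NormedSpace ℝ E] [FiniteDimensional ℝ E] {v : E → E} (hv : ContDiff ℝ 1 v)
    {F G : ℝ → E} {a b t₀ : ℝ}
    (hF : ∀ t ∈ Icc a b, HasDerivWithinAt F (v (F t)) (Icc a b) t)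
    (hG : ∀ t ∈ Icc a b, HasDerivWithinAt G (v (G t)) (Icc a b) t)
    (ht₀ : t₀ ∈ Icc a b) (heq : F t₀ = G t₀) : EqOn F G (Icc a b) := by
  have hFc : ContinuousOn F (Icc a b) := fun t ht ↦ (hF t ht).continuousWithinAt
  have hGc : ContinuousOn G (Icc a b) := fun t ht ↦ (hG t ht).continuousWithinAt
  obtain ⟨R, hR⟩ : ∃ R, F '' Icc a b ∪ G '' Icc a b ⊆ Metric.closedBall 0 R :=
    ((isCompact_Icc.image_of_continuousOn hFc).union
      (isCompact_Icc.image_of_continuousOn hGc)).isBounded.subset_closedBall 0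
  obtain ⟨K, hK⟩ := hv.contDiffOn.exists_lipschitzOnWith one_ne_zero (convex_closedBall 0 R)
    (isCompact_closedBall 0 R)
  have hFs : ∀ t ∈ Icc a b, F t ∈ Metric.closedBall 0 R := fun t ht ↦ hR (.inl ⟨t, ht, rfl⟩)
  have hGs : ∀ t ∈ Icc a b, G t ∈ Metric.closedBall 0 R := fun t ht ↦ hR (.inr ⟨t, ht, rfl⟩)
  rw [← Icc_union_Icc_eq_Icc ht₀.1 ht₀.2]
  have hleft : Ioc a t₀ ⊆ Icc a b := fun t ht ↦ ⟨ht.1.le, ht.2.trans ht₀.2⟩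
  have hright : Ico t₀ b ⊆ Icc a b := fun t ht ↦ ⟨ht₀.1.trans ht.1, ht.2.le⟩
  have hle : ∀ t ∈ Ioc a t₀, Icc a b ∈ 𝓝[≤] t := fun t ht ↦
    Icc_mem_nhdsLE_of_mem ⟨ht.1, ht.2.trans ht₀.2⟩
  have hge : ∀ t ∈ Ico t₀ b, Icc a b ∈ 𝓝[≥] t := fun t ht ↦
    Icc_mem_nhdsGE_of_mem ⟨ht₀.1.trans ht.1, ht.2⟩
  refine EqOn.union ?_ ?_
  · exact ODE_solution_unique_of_mem_Icc_left (fun _ _ ↦ hK)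
      (hFc.mono (Icc_subset_Icc_right ht₀.2))
      (fun t ht ↦ (hF t (hleft ht)).mono_of_mem_nhdsWithin (hle t ht))
      (fun t ht ↦ hFs t (hleft ht)) (hGc.mono (Icc_subset_Icc_right ht₀.2))
      (fun t ht ↦ (hG t (hleft ht)).mono_of_mem_nhdsWithin (hle t ht))
      (fun t ht ↦ hGs t (hleft ht)) heq
  · exact ODE_solution_unique_of_mem_Icc_right (fun _ _ ↦ hK)
      (hFc.mono (Icc_subset_Icc_left ht₀.1))
      (fun t ht ↦ (hF t (hright ht)).mono_of_mem_nhdsWithin (hge t ht))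
      (fun t ht ↦ hFs t (hright ht)) (hGc.mono (Icc_subset_Icc_left ht₀.1))
      (fun t ht ↦ (hG t (hright ht)).mono_of_mem_nhdsWithin (hge t ht))
      (fun t ht ↦ hGs t (hright ht)) heq

theorem hasDerivWithinAt_integral_Icc {g : ℝ → ℝ} {a b t : ℝ} (hg : ContinuousOn g (Icc a b))
    (ht : t ∈ Icc a b) : HasDerivWithinAt (fun u ↦ ∫ x in a..u, g x) (g t) (Icc a b) t := by
  have : Fact (t ∈ Icc a b) := ⟨ht⟩
  exact intervalIntegral.integral_hasDerivWithinAt_right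
    ((hg.mono (Icc_subset_Icc le_rfl ht.2)).intervalIntegrable_of_Icc ht.1)
    (hg.stronglyMeasurableAtFilter_nhdsWithin measurableSet_Icc t) (hg t ht)

theorem HasDerivWithinAt.mul_exp_integral {g p : ℝ → ℝ} {g' a b t : ℝ}
    (hg : HasDerivWithinAt g g' (Icc a b) t) (hp : ContinuousOn p (Icc a b)) (ht : t ∈ Icc a b) :
    HasDerivWithinAt (fun u ↦ g u * Real.exp (∫ x in a..u, p x))
      ((g' + p t * g t) * Real.exp (∫ x in a..t, p x)) (Icc a b) t :=
  (hg.fun_mul (hasDerivWithinAt_integral_Icc hp ht).exp).congr_deriv (by ring)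

structure IsSolutionOn (m : ℝ) (I : Set ℝ) (f f' f'' f''' : ℝ → ℝ) : Prop where
  hasDerivWithinAt₀ : ∀ t ∈ I, HasDerivWithinAt f (f' t) I t
  hasDerivWithinAt₁ : ∀ t ∈ I, HasDerivWithinAt f' (f'' t) I t
  hasDerivWithinAt₂ : ∀ t ∈ I, HasDerivWithinAt f'' (f''' t) I t
  ode : ∀ t ∈ I, f''' t + (m + 1) / 2 * f t * f'' t - m * (f' t) ^ 2 = 0

noncomputable def odeField (m : ℝ) (p : ℝ × ℝ × ℝ) : ℝ × ℝ × ℝ :=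
  (p.2.1, p.2.2, m * p.2.1 ^ 2 - (m + 1) / 2 * p.1 * p.2.2)

theorem contDiff_odeField (m : ℝ) : ContDiff ℝ 1 (odeField m) := by
  unfold odeField
  fun_prop

namespace IsSolutionOn

variable {m : ℝ} {I : Set ℝ} {f f' f'' f''' : ℝ → ℝ}

theorem hasDerivWithinAt_odeField (hs : IsSolutionOn m I f f' f'' f''') {t : ℝ} (ht : t ∈ I) :
    HasDerivWithinAt (fun u ↦ (f u, f' u, f'' u)) (odeField m (f t, f' t, f'' t)) I t := by
  have h₃ : f''' t = m * f' t ^ 2 - (m + 1) / 2 * f t * f'' t := by linarith [hs.ode t ht]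
  exact (hs.hasDerivWithinAt₀ t ht).prodMk
    ((hs.hasDerivWithinAt₁ t ht).prodMk (h₃ ▸ hs.hasDerivWithinAt₂ t ht))

theorem eq_of_deriv_eq_zero_of_deriv2_eq_zero (hs : IsSolutionOn m I f f' f'' f''')
    (hI : I.OrdConnected) {t₁ : ℝ} (ht₁ : t₁ ∈ I) (h₁ : f' t₁ = 0) (h₂ : f'' t₁ = 0) :
    ∀ x ∈ I, f x = f t₁ := by
  intro x hx
  have hJ : uIcc t₁ x ⊆ I := hI.uIcc_subset ht₁ hx
  have hconst : odeField m (f t₁, 0, 0) = 0 := by simp [odeField]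
  have hstate := ODE_solution_unique_of_contDiff_of_mem_Icc (contDiff_odeField m)
    (F := fun u ↦ (f u, f' u, f'' u)) (G := fun _ ↦ (f t₁, 0, 0))
    (fun t ht ↦ (hs.hasDerivWithinAt_odeField (hJ ht)).mono hJ)
    (fun t _ ↦ hconst ▸ hasDerivWithinAt_const _ _ _) left_mem_uIcc (by simp [h₁, h₂])
    right_mem_uIcc
  exact congrArg Prod.fst hstate

theorem hasDerivWithinAt_mul_integratingFactor (hs : IsSolutionOn m I f f' f'' f''')
    {a b t : ℝ} (hJ : Icc a b ⊆ I) (ht : t ∈ Icc a b) :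
    HasDerivWithinAt (fun u ↦ f'' u * exp (∫ x in a..u, (m + 1) / 2 * f x))
      (m * f' t ^ 2 * exp (∫ x in a..t, (m + 1) / 2 * f x)) (Icc a b) t := by
  have hfc : ContinuousOn (fun x ↦ (m + 1) / 2 * f x) (Icc a b) :=
    continuousOn_const.mul fun u hu ↦ (hs.hasDerivWithinAt₀ u (hJ hu)).continuousWithinAt.mono hJ
  refine (((hs.hasDerivWithinAt₂ t (hJ ht)).mono hJ).mul_exp_integral hfc ht).congr_deriv ?_
  linear_combination exp (∫ x in a..t, (m + 1) / 2 * f x) * hs.ode t (hJ ht)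

theorem exists_deriv_eq_zero_and_deriv2_eq_zero (hs : IsSolutionOn m I f f' f'' f''')
    (hm : 0 < m) {a b : ℝ} (hab : a < b) (hJ : Icc a b ⊆ I) (ha : 0 ≤ f'' a) (hb : f'' b ≤ 0) :
    ∃ c ∈ I, f' c = 0 ∧ f'' c = 0 := by
  set P : ℝ → ℝ := fun u ↦ ∫ x in a..u, (m + 1) / 2 * f x
  set w : ℝ → ℝ := fun u ↦ f'' u * exp (P u)
  have hw : ∀ t ∈ Icc a b, HasDerivWithinAt w (m * f' t ^ 2 * exp (P t)) (Icc a b) t :=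
    fun t ht ↦ hs.hasDerivWithinAt_mul_integratingFactor hJ ht
  have hmono : MonotoneOn w (Icc a b) := by
    refine monotoneOn_of_hasDerivWithinAt_nonneg (f' := fun t ↦ m * f' t ^ 2 * exp (P t))
      (convex_Icc a b) (fun t ht ↦ (hw t ht).continuousWithinAt) (fun t ht ↦ ?_)
      (fun t _ ↦ by positivity)
    rw [interior_Icc] at ht ⊢
    exact (hw t (Ioo_subset_Icc_self ht)).mono Ioo_subset_Icc_self
  have ha' : a ∈ Icc a b := left_mem_Icc.2 hab.le
  have hb' : b ∈ Icc a b := right_mem_Icc.2 hab.le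
  have hwa : 0 ≤ w a := mul_nonneg ha (exp_pos _).le
  have hwb : w b ≤ 0 := mul_nonpos_of_nonpos_of_nonneg hb (exp_pos _).le
  have hw0 : EqOn w 0 (Icc a b) := fun u hu ↦
    le_antisymm ((hmono hu hb' hu.2).trans hwb) (hwa.trans (hmono ha' hu hu.1))
  have hderiv : m * f' a ^ 2 * exp (P a) = 0 := (uniqueDiffOn_Icc hab a ha').eq_deriv _
    (hw a ha') ((hasDerivWithinAt_const a _ 0).congr hw0 (hw0 ha'))
  refine ⟨a, hJ ha', ?_, ?_⟩
  · simpa [hm.ne', (exp_pos _).ne'] using hderiv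
  · simpa [w, (exp_pos _).ne'] using hw0 ha'

end IsSolutionOn

theorem stmt3 (m : ℝ) (hm : 0 < m) (I : Set ℝ) (hI : I.OrdConnected)
    (f f' f'' f''' : ℝ → ℝ)
    (hf : ∀ t ∈ I, HasDerivWithinAt f (f' t) I t)
    (hf' : ∀ t ∈ I, HasDerivWithinAt f' (f'' t) I t)
    (hf'' : ∀ t ∈ I, HasDerivWithinAt f'' (f''' t) I t)
    (hode : ∀ t ∈ I,
      f''' t + (m + 1) / 2 * f t * f'' t - m * (f' t) ^ 2 = 0)
    (hnc : ¬ ∀ x ∈ I, ∀ y ∈ I, f x = f y)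
    (t₀ : ℝ) (ht₀ : t₀ ∈ I) (h : 0 ≤ f'' t₀) :
    ∀ t ∈ I, t₀ < t → 0 < f'' t := by
  have hs : IsSolutionOn m I f f' f'' f''' := ⟨hf, hf', hf'', hode⟩
  intro t ht htt
  by_contra! hneg
  obtain ⟨c, hc, h₁, h₂⟩ :=
    hs.exists_deriv_eq_zero_and_deriv2_eq_zero hm htt (hI.out ht₀ ht) h hneg
  have hconst := hs.eq_of_deriv_eq_zero_of_deriv2_eq_zero hI hc h₁ h₂
  exact hnc fun x hx y hy ↦ (hconst x hx).trans (hconst y hy).symm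
end

section
/- Let m < 0. If f solves f''' + ((m+1)/2) f f'' - m (f')² = 0 on [0,∞) with f'(0) = -1 and f'(t) → 0 as t → ∞, then f''(0) > 0. -/
open Real Set Filter Topology

/-!
If `f''(0) ≤ 0`, multiply `f''` by the integrating factor `exp (∫₀ᵗ (m+1)/2 · f)`: by the equation
the product has derivative `exp (…) · m (f')² ≤ 0`, so it stays `≤ f''(0) ≤ 0`. Hence `f'' ≤ 0`,
`f'` is antitone and `f' ≤ f'(0) = -1` everywhere, which contradicts `f' → 0`.
-/

section HalfLine

variable {a : ℝ} {p y y' : ℝ → ℝ}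

theorem antitoneOn_Ici_of_hasDerivWithinAt_nonpos
    (hy : ∀ t ∈ Ici a, HasDerivWithinAt y (y' t) (Ici a) t) (hy' : ∀ t ∈ Ici a, y' t ≤ 0) :
    AntitoneOn y (Ici a) :=
  antitoneOn_of_hasDerivWithinAt_nonpos (convex_Ici a)
    (fun t ht => (hy t ht).continuousWithinAt)
    (fun t ht => (hy t (interior_subset ht)).mono interior_subset)
    (fun t ht => hy' t (interior_subset ht))

theorem hasDerivWithinAt_integral_Ici (hp : ContinuousOn p (Ici a)) {t : ℝ} (ht : t ∈ Ici a) :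
    HasDerivWithinAt (fun x => ∫ s in a..x, p s) (p t) (Ici a) t := by
  -- `intervalIntegral.FTCFilter` has no instance for `Ici a` at interior points, so work on `Icc`.
  have hIcc : Icc a (t + 1) ⊆ Ici a := Icc_subset_Ici_self
  have : Fact (t ∈ Icc a (t + 1)) := ⟨⟨ht, by linarith⟩⟩
  refine (intervalIntegral.integral_hasDerivWithinAt_right (s := Icc a (t + 1))
    ((hp.mono fun s hs => ((uIcc_of_le (mem_Ici.1 ht)).le hs).1).intervalIntegrable)
    ⟨Icc a (t + 1), self_mem_nhdsWithin, (hp.mono hIcc).aestronglyMeasurable measurableSet_Icc⟩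
    ((hp t ht).mono hIcc)).mono_of_mem_nhdsWithin ?_
  rw [← Ici_inter_Iic]
  exact inter_mem_nhdsWithin _ (Iic_mem_nhds (lt_add_one t))

theorem antitoneOn_exp_integral_mul_of_deriv_add_mul_nonpos (hp : ContinuousOn p (Ici a))
    (hy : ∀ t ∈ Ici a, HasDerivWithinAt y (y' t) (Ici a) t)
    (hineq : ∀ t ∈ Ici a, y' t + p t * y t ≤ 0) :
    AntitoneOn (fun t => exp (∫ s in a..t, p s) * y t) (Ici a) := by
  refine antitoneOn_Ici_of_hasDerivWithinAt_nonpos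
    (y' := fun t => exp (∫ s in a..t, p s) * (y' t + p t * y t)) (fun t ht => ?_)
    (fun t ht => mul_nonpos_of_nonneg_of_nonpos (exp_pos _).le (hineq t ht))
  have hprod : HasDerivWithinAt (fun t => exp (∫ s in a..t, p s) * y t)
      (exp (∫ s in a..t, p s) * p t * y t + exp (∫ s in a..t, p s) * y' t) (Ici a) t :=
    (hasDerivWithinAt_integral_Ici hp ht).exp.mul (hy t ht)
  convert hprod using 1
  ring

theorem nonpos_of_deriv_add_mul_nonpos (hp : ContinuousOn p (Ici a))
    (hy : ∀ t ∈ Ici a, HasDerivWithinAt y (y' t) (Ici a) t)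
    (hineq : ∀ t ∈ Ici a, y' t + p t * y t ≤ 0) (ha : y a ≤ 0) {t : ℝ} (ht : t ∈ Ici a) :
    y t ≤ 0 := by
  have hmono := antitoneOn_exp_integral_mul_of_deriv_add_mul_nonpos hp hy hineq
    self_mem_Ici ht ht
  simp only [intervalIntegral.integral_same, exp_zero, one_mul] at hmono
  exact nonpos_of_mul_nonpos_right (hmono.trans ha) (exp_pos _)

end HalfLine

theorem stmt4 (m : ℝ) (hm : m < 0) (f f' f'' f''' : ℝ → ℝ)
    (hf : ∀ t ∈ Set.Ici (0:ℝ), HasDerivWithinAt f (f' t) (Set.Ici 0) t)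
    (hf' : ∀ t ∈ Set.Ici (0:ℝ), HasDerivWithinAt f' (f'' t) (Set.Ici 0) t)
    (hf'' : ∀ t ∈ Set.Ici (0:ℝ), HasDerivWithinAt f'' (f''' t) (Set.Ici 0) t)
    (hode : ∀ t ∈ Set.Ici (0:ℝ),
      f''' t + (m + 1) / 2 * f t * f'' t - m * (f' t) ^ 2 = 0)
    (h0 : f' 0 = -1)
    (hlim : Filter.Tendsto f' Filter.atTop (nhds 0)) :
    0 < f'' 0 := by
  by_contra! hf''0
  have hcoeff : ContinuousOn (fun t => (m + 1) / 2 * f t) (Ici 0) :=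
    continuousOn_const.mul fun t ht => (hf t ht).continuousWithinAt
  have hineq : ∀ t ∈ Ici (0:ℝ), f''' t + (m + 1) / 2 * f t * f'' t ≤ 0 := fun t ht => by
    linarith [hode t ht, mul_nonpos_of_nonpos_of_nonneg hm.le (sq_nonneg (f' t))]
  have hf''_nonpos : ∀ t ∈ Ici (0:ℝ), f'' t ≤ 0 := fun t ht =>
    nonpos_of_deriv_add_mul_nonpos hcoeff hf'' hineq hf''0 ht
  have hf'_le : ∀ t ∈ Ici (0:ℝ), f' t ≤ -1 := fun t ht =>
    h0 ▸ antitoneOn_Ici_of_hasDerivWithinAt_nonpos hf' hf''_nonpos self_mem_Ici ht ht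
  have := le_of_tendsto hlim (eventually_atTop.2 ⟨0, hf'_le⟩)
  norm_num at this
end

section
/- Let m > 0. If f solves f''' + ((m+1)/2) f f'' - m (f')² = 0 on [0,∞) with f'(0) = -1 and f'(t) → 0 as t → ∞, then f(t) > 0 for all t ≥ 0 and f is (weakly) decreasing on [0,∞); in particular f(0) > 0. -/
open Real Set Filter Topology

/-!
Write the equation as `f''' = m f'² - (m+1)/2 f f''`. At an interior maximum `c` of `f'` with
`f' c ≠ 0` we would have `f'' c = 0` and `f''' c = m (f' c)² > 0`, which is impossible; as
`f' 0 = -1` and `f' → 0`, this forces `f' ≤ 0`. A zero `t` of `f'` is then a maximum, so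
`f'' t = 0` as well, and backward uniqueness for the linear system satisfied by `(f', f'')` gives
`f' ≡ 0` on `[0, t]`; hence `f' < 0`. If `f τ ≤ 0`, then `f ≤ 0` after `τ`. Since `f' < 0` tends
to `0`, some `ξ > τ` has `f'' ξ > 0`, and `f''' > 0` wherever `f''` comes back to `f'' ξ`, so
`f'' ≥ f'' ξ` after `ξ` and `f'` eventually becomes nonnegative, a contradiction.
-/

theorem not_isLocalMax_of_deriv_eq_zero_of_hasDerivAt_pos {g g' : ℝ → ℝ} {c d : ℝ}
    (hg : ∀ᶠ t in 𝓝 c, HasDerivAt g (g' t) t) (hc : g' c = 0) (hd : HasDerivAt g' d c)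
    (hd0 : 0 < d) : ¬IsLocalMax g c := by
  intro hmax
  have hsign := eventually_nhdsWithin_sign_eq_of_deriv_pos (hd.deriv ▸ hd0) hc
  obtain ⟨ε, hε, hball⟩ := Metric.eventually_nhds_iff_ball.1 (hmax.and (hg.and hsign))
  have hcx : c < c + ε / 2 := by linarith
  have hsub : Icc c (c + ε / 2) ⊆ Metric.ball c ε := fun t ht => by
    rw [Real.ball_eq_Ioo]; constructor <;> linarith [ht.1, ht.2]
  obtain ⟨ξ, hξ, hslope⟩ := exists_hasDerivAt_eq_slope g g' hcx
    (HasDerivAt.continuousOn fun t ht => (hball t (hsub ht)).2.1)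
    (fun t ht => (hball t (hsub (Ioo_subset_Icc_self ht))).2.1)
  have hg'ξ : 0 < g' ξ := by
    rw [← sign_eq_one_iff, (hball ξ (hsub (Ioo_subset_Icc_self hξ))).2.2,
      sign_eq_one_iff, sub_pos]
    exact hξ.1
  have hle : g (c + ε / 2) ≤ g c := (hball _ (hsub (right_mem_Icc.2 hcx.le))).1
  rw [hslope] at hg'ξ
  have := (div_pos_iff_of_pos_right (sub_pos.2 hcx)).1 hg'ξ
  linarith

theorem ContinuousOn.exists_isMaxOn_Ici_of_tendsto {g : ℝ → ℝ} {a l x₀ : ℝ}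
    (hg : ContinuousOn g (Ici a)) (hlim : Tendsto g atTop (𝓝 l)) (hx₀ : x₀ ∈ Ici a)
    (hl : l < g x₀) : ∃ c ∈ Ici a, IsMaxOn g (Ici a) c := by
  refine hg.exists_isMaxOn' isClosed_Ici hx₀ ?_
  rw [cocompact_eq_atBot_atTop, inf_sup_right]
  refine eventually_sup.2 ⟨?_, ?_⟩
  · filter_upwards [inf_le_left (a := atBot) (eventually_lt_atBot a),
      inf_le_right (a := atBot) (mem_principal_self (Ici a))] with x hxa hx
    exact absurd hx (not_le.2 hxa)
  · exact inf_le_left (b := 𝓟 (Ici a)) ((hlim.eventually (gt_mem_nhds hl)).mono fun _ h => h.le)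

theorem exists_deriv_pos_of_lt_of_tendsto {g g' : ℝ → ℝ} {a l : ℝ}
    (hg : ∀ t ≥ a, HasDerivAt g (g' t) t) (hlim : Tendsto g atTop (𝓝 l)) (ha : g a < l) :
    ∃ ξ > a, 0 < g' ξ := by
  obtain ⟨N, hN⟩ := (hlim.eventually (lt_mem_nhds ha)).exists_forall_of_atTop
  have hab : a < max N (a + 1) := by linarith [le_max_right N (a + 1)]
  obtain ⟨ξ, hξ, hslope⟩ := exists_hasDerivAt_eq_slope g g' hab
    (HasDerivAt.continuousOn fun t ht => hg t ht.1) (fun t ht => hg t ht.1.le)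
  refine ⟨ξ, hξ.1, ?_⟩
  rw [hslope]
  exact div_pos (sub_pos.2 (hN _ (le_max_left _ _))) (sub_pos.2 hab)

theorem le_of_hasDerivAt_pos_of_eq {g g' : ℝ → ℝ} {a : ℝ}
    (hg : ∀ t ≥ a, HasDerivAt g (g' t) t) (hpos : ∀ t ≥ a, g t = g a → 0 < g' t) :
    ∀ t ≥ a, g a ≤ g t := by
  intro t ht
  have := image_le_of_deriv_right_lt_deriv_boundary' (a := a) (b := t) (f := fun x => -g x)
    (f' := fun x => -g' x) (B := fun _ => -g a) (B' := fun _ => 0)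
    (HasDerivAt.continuousOn fun x hx => (hg x hx.1).neg)
    (fun x hx => (hg x hx.1).neg.hasDerivWithinAt) le_rfl continuousOn_const
    (fun _ _ => hasDerivWithinAt_const _ _ _)
    (fun x hx hx' => neg_neg_iff_pos.2 (hpos x hx.1 (neg_inj.1 hx')))
    (right_mem_Icc.2 ht)
  simpa using this

theorem exists_nonneg_of_le_deriv {g g' : ℝ → ℝ} {a ε : ℝ} (hε : 0 < ε)
    (hg : ∀ t ≥ a, HasDerivAt g (g' t) t) (hg' : ∀ t ≥ a, ε ≤ g' t) : ∃ t ≥ a, 0 ≤ g t := by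
  have hab : a ≤ a + |g a| / ε := le_add_of_nonneg_right (by positivity)
  refine ⟨_, hab, ?_⟩
  have hgrowth := image_le_of_deriv_right_le_deriv_boundary (a := a) (b := a + |g a| / ε)
    (f := fun s => g a + ε * (s - a)) (f' := fun _ => ε) (B' := g') (by fun_prop)
    (fun s _ => (((hasDerivAt_id s).sub_const a).const_mul ε).const_add (g a)
      |>.hasDerivWithinAt |>.congr_deriv (by simp))
    (by simp) (HasDerivAt.continuousOn fun s hs => hg s hs.1)
    (fun s hs => (hg s hs.1).hasDerivWithinAt) (fun s hs => hg' s hs.1) (right_mem_Icc.2 hab)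
  have : ε * (a + |g a| / ε - a) = |g a| := by field_simp; ring
  simp only [this] at hgrowth
  linarith [neg_abs_le (g a)]

theorem eqOn_zero_of_linearSecondOrder_of_vanish_right {y y' y'' p q : ℝ → ℝ} {a b : ℝ}
    (hp : ContinuousOn p (Icc a b)) (hq : ContinuousOn q (Icc a b))
    (hy : ContinuousOn y (Icc a b)) (hy' : ContinuousOn y' (Icc a b))
    (hdy : ∀ t ∈ Ioc a b, HasDerivWithinAt y (y' t) (Iic t) t)
    (hdy' : ∀ t ∈ Ioc a b, HasDerivWithinAt y' (y'' t) (Iic t) t)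
    (hode : ∀ t ∈ Ioc a b, y'' t = p t * y t + q t * y' t)
    (hyb : y b = 0) (hy'b : y' b = 0) : EqOn y 0 (Icc a b) := by
  obtain ⟨P, hP⟩ := isCompact_Icc.exists_bound_of_continuousOn hp
  obtain ⟨Q, hQ⟩ := isCompact_Icc.exists_bound_of_continuousOn hq
  set v : ℝ → ℝ × ℝ → ℝ × ℝ := fun t u => (u.2, p t * u.1 + q t * u.2)
  have hv : ∀ t ∈ Ioc a b, LipschitzOnWith (1 + P + Q).toNNReal (v t) univ := by
    intro t ht
    refine (LipschitzWith.of_dist_le' fun u w => ?_).lipschitzOnWith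
    have hPt : |p t| ≤ P := hP t (Ioc_subset_Icc_self ht)
    have hQt : |q t| ≤ Q := hQ t (Ioc_subset_Icc_self ht)
    have h1 : |u.1 - w.1| ≤ dist u w := by
      rw [← Real.dist_eq, Prod.dist_eq]; exact le_max_left _ _
    have h2 : |u.2 - w.2| ≤ dist u w := by
      rw [← Real.dist_eq, Prod.dist_eq]; exact le_max_right _ _
    have hD : 0 ≤ dist u w := dist_nonneg
    have hP0 : 0 ≤ P := (abs_nonneg _).trans hPt
    have hQ0 : 0 ≤ Q := (abs_nonneg _).trans hQt
    rw [Prod.dist_eq, Real.dist_eq, Real.dist_eq]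
    refine max_le (by nlinarith) ?_
    calc |p t * u.1 + q t * u.2 - (p t * w.1 + q t * w.2)|
        = |p t * (u.1 - w.1) + q t * (u.2 - w.2)| := by ring_nf
      _ ≤ |p t| * |u.1 - w.1| + |q t| * |u.2 - w.2| := by
        rw [← abs_mul, ← abs_mul]; exact abs_add_le _ _
      _ ≤ P * dist u w + Q * dist u w := by gcongr
      _ ≤ (1 + P + Q) * dist u w := by nlinarith
  have hsol := ODE_solution_unique_of_mem_Icc_left (v := v) (s := fun _ => univ)
    (f := fun t => (y t, y' t)) (g := fun _ => 0) hv (hy.prodMk hy')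
    (fun t ht => by simpa [v, hode t ht] using (hdy t ht).prodMk (hdy' t ht))
    (fun _ _ => trivial) continuousOn_const
    (fun t _ => (hasDerivWithinAt_const t (Iic t) (0 : ℝ × ℝ)).congr_deriv (by ext <;> simp [v]))
    (fun _ _ => trivial) (by simp [hyb, hy'b])
  exact fun t ht => congrArg Prod.fst (hsol ht)

structure IsSimilaritySolution (m : ℝ) (f f' f'' f''' : ℝ → ℝ) : Prop where
  hasDerivWithinAt : ∀ t ∈ Ici (0 : ℝ), HasDerivWithinAt f (f' t) (Ici 0) t
  hasDerivWithinAt' : ∀ t ∈ Ici (0 : ℝ), HasDerivWithinAt f' (f'' t) (Ici 0) t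
  hasDerivWithinAt'' : ∀ t ∈ Ici (0 : ℝ), HasDerivWithinAt f'' (f''' t) (Ici 0) t
  ode : ∀ t ∈ Ici (0 : ℝ), f''' t + (m + 1) / 2 * f t * f'' t - m * f' t ^ 2 = 0

namespace IsSimilaritySolution

variable {m : ℝ} {f f' f'' f''' : ℝ → ℝ} {t : ℝ}

theorem continuousOn (h : IsSimilaritySolution m f f' f'' f''') : ContinuousOn f (Ici 0) :=
  fun t ht => (h.hasDerivWithinAt t ht).continuousWithinAt

theorem continuousOn' (h : IsSimilaritySolution m f f' f'' f''') : ContinuousOn f' (Ici 0) :=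
  fun t ht => (h.hasDerivWithinAt' t ht).continuousWithinAt

theorem continuousOn'' (h : IsSimilaritySolution m f f' f'' f''') : ContinuousOn f'' (Ici 0) :=
  fun t ht => (h.hasDerivWithinAt'' t ht).continuousWithinAt

theorem hasDerivAt (h : IsSimilaritySolution m f f' f'' f''') (ht : 0 < t) :
    HasDerivAt f (f' t) t :=
  (h.hasDerivWithinAt t ht.le).hasDerivAt (Ici_mem_nhds ht)

theorem hasDerivAt' (h : IsSimilaritySolution m f f' f'' f''') (ht : 0 < t) :
    HasDerivAt f' (f'' t) t :=
  (h.hasDerivWithinAt' t ht.le).hasDerivAt (Ici_mem_nhds ht)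

theorem hasDerivAt'' (h : IsSimilaritySolution m f f' f'' f''') (ht : 0 < t) :
    HasDerivAt f'' (f''' t) t :=
  (h.hasDerivWithinAt'' t ht.le).hasDerivAt (Ici_mem_nhds ht)

theorem third_deriv_eq (h : IsSimilaritySolution m f f' f'' f''') (ht : 0 ≤ t) :
    f''' t = m * f' t ^ 2 - (m + 1) / 2 * f t * f'' t := by
  linarith [h.ode t ht]

-- Reading `m f'²` as `(m f') f'` makes the system for `(f', f'')` linear.
theorem deriv_eqOn_zero (h : IsSimilaritySolution m f f' f'' f''') {t₁ : ℝ} (h₁ : f' t₁ = 0)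
    (h₂ : f'' t₁ = 0) : EqOn f' 0 (Icc 0 t₁) :=
  have hsub : Icc 0 t₁ ⊆ Ici 0 := Icc_subset_Ici_self
  eqOn_zero_of_linearSecondOrder_of_vanish_right (p := fun t => m * f' t)
    (q := fun t => -((m + 1) / 2 * f t)) (continuousOn_const.mul (h.continuousOn'.mono hsub))
    ((h.continuousOn.mono hsub).const_mul _).neg
    (h.continuousOn'.mono hsub) (h.continuousOn''.mono hsub)
    (fun t ht => (h.hasDerivAt' ht.1).hasDerivWithinAt)
    (fun t ht => (h.hasDerivAt'' ht.1).hasDerivWithinAt)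
    (fun t ht => by rw [h.third_deriv_eq ht.1.le]; ring) h₁ h₂

theorem not_isLocalMax_deriv (h : IsSimilaritySolution m f f' f'' f''') (hm : 0 < m)
    (ht : 0 < t) (hf't : f' t ≠ 0) : ¬IsLocalMax f' t := fun hmax =>
  have hf''t : f'' t = 0 := hmax.hasDerivAt_eq_zero (h.hasDerivAt' ht)
  not_isLocalMax_of_deriv_eq_zero_of_hasDerivAt_pos
    ((lt_mem_nhds ht).mono fun _ hs => h.hasDerivAt' hs) hf''t (h.hasDerivAt'' ht)
    (by rw [h.third_deriv_eq ht.le, hf''t]; simpa using mul_pos hm (sq_pos_of_ne_zero hf't))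
    hmax

theorem deriv_nonpos (h : IsSimilaritySolution m f f' f'' f''') (hm : 0 < m) (h0 : f' 0 < 0)
    (hlim : Tendsto f' atTop (𝓝 0)) : ∀ t, 0 ≤ t → f' t ≤ 0 := by
  by_contra! ⟨a, ha, hfa⟩
  obtain ⟨c, hc, hmax⟩ := h.continuousOn'.exists_isMaxOn_Ici_of_tendsto hlim ha hfa
  have hfc : 0 < f' c := hfa.trans_le (hmax ha)
  have hc0 : 0 < c := lt_of_le_of_ne hc fun hc0 => by rw [← hc0] at hfc; linarith
  exact h.not_isLocalMax_deriv hm hc0 hfc.ne' (hmax.isLocalMax (Ici_mem_nhds hc0))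

theorem deriv_neg (h : IsSimilaritySolution m f f' f'' f''') (hm : 0 < m) (h0 : f' 0 < 0)
    (hlim : Tendsto f' atTop (𝓝 0)) : ∀ t, 0 ≤ t → f' t < 0 := by
  intro t ht
  refine (h.deriv_nonpos hm h0 hlim t ht).lt_of_ne fun hft => ?_
  have ht0 : 0 < t := lt_of_le_of_ne ht fun ht0 => by rw [← ht0] at hft; linarith
  have hmax : IsLocalMax f' t := Filter.mem_of_superset (Ici_mem_nhds ht0) fun s hs => by
    simpa [hft] using h.deriv_nonpos hm h0 hlim s hs
  have hf''t : f'' t = 0 := hmax.hasDerivAt_eq_zero (h.hasDerivAt' ht0)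
  have hf'0 : f' 0 = 0 := h.deriv_eqOn_zero hft hf''t (left_mem_Icc.2 ht)
  linarith

theorem antitoneOn (h : IsSimilaritySolution m f f' f'' f''') (hf' : ∀ t, 0 ≤ t → f' t ≤ 0) :
    AntitoneOn f (Ici 0) :=
  antitoneOn_of_hasDerivWithinAt_nonpos (convex_Ici 0) h.continuousOn
    (fun t ht => (h.hasDerivAt (by simpa using ht)).hasDerivWithinAt)
    (fun t ht => hf' t (interior_subset ht))

theorem pos (h : IsSimilaritySolution m f f' f'' f''') (hm : 0 < m) (h0 : f' 0 < 0)
    (hlim : Tendsto f' atTop (𝓝 0)) : ∀ t, 0 ≤ t → 0 < f t := by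
  by_contra! ⟨τ, hτ, hfτ⟩
  have hf'neg := h.deriv_neg hm h0 hlim
  have hfneg : ∀ t ≥ τ, f t ≤ 0 := fun t ht =>
    ((h.antitoneOn fun s hs => (hf'neg s hs).le) hτ (hτ.trans ht) ht).trans hfτ
  obtain ⟨ξ, hξ, hε⟩ := exists_deriv_pos_of_lt_of_tendsto
    (fun t ht => h.hasDerivAt' (by linarith)) hlim (hf'neg (τ + 1) (by linarith))
  -- Where `f''` is back at the level `f'' ξ > 0`, the equation and `f ≤ 0` give `f''' > 0`.
  have hf''ge : ∀ t ≥ ξ, f'' ξ ≤ f'' t :=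
    le_of_hasDerivAt_pos_of_eq (fun t ht => h.hasDerivAt'' (by linarith)) fun t ht heq => by
      rw [h.third_deriv_eq (by linarith), heq]
      have hf't := hf'neg t (by linarith)
      have hft : 0 ≤ -f t := neg_nonneg.2 (hfneg t (by linarith))
      nlinarith [mul_pos hm (sq_pos_of_neg hf't), mul_nonneg hft hε.le]
  obtain ⟨t, ht, hf't⟩ := exists_nonneg_of_le_deriv hε
    (fun t ht => h.hasDerivAt' (by linarith)) hf''ge
  linarith [hf'neg t (by linarith)]

end IsSimilaritySolution

theorem stmt5 (m : ℝ) (hm : 0 < m) (f f' f'' f''' : ℝ → ℝ)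
    (hf : ∀ t ∈ Set.Ici (0:ℝ), HasDerivWithinAt f (f' t) (Set.Ici 0) t)
    (hf' : ∀ t ∈ Set.Ici (0:ℝ), HasDerivWithinAt f' (f'' t) (Set.Ici 0) t)
    (hf'' : ∀ t ∈ Set.Ici (0:ℝ), HasDerivWithinAt f'' (f''' t) (Set.Ici 0) t)
    (hode : ∀ t ∈ Set.Ici (0:ℝ),
      f''' t + (m + 1) / 2 * f t * f'' t - m * (f' t) ^ 2 = 0)
    (h0 : f' 0 = -1)
    (hlim : Filter.Tendsto f' Filter.atTop (nhds 0)) :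
    (∀ t : ℝ, 0 ≤ t → 0 < f t) ∧ AntitoneOn f (Set.Ici 0) ∧ 0 < f 0 := by
  have h : IsSimilaritySolution m f f' f'' f''' := ⟨hf, hf', hf'', hode⟩
  have h0' : f' 0 < 0 := by rw [h0]; norm_num
  have hpos := h.pos hm h0' hlim
  exact ⟨hpos, h.antitoneOn fun t ht => (h.deriv_neg hm h0' hlim t ht).le, hpos 0 le_rfl⟩
end

section
/- If f solves f''' + ((m+1)/2) f f'' - m (f')² = 0 on [α,β], then f(β)f''(β) - f(α)f''(α) - ½(f'(β))² + ½(f'(α))² + ((m+1)/2)(f(β)² f'(β) - f(α)² f'(α)) = (2m+1) ∫_α^β f(t) (f'(t))² dt. -/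
/-! Multiplying the equation by `f` turns it into an exact derivative:
`d/dt (f f'' - ½ f'² + (m+1)/2 f² f') = f (f''' + (m+1)/2 f f'') + (m+1) f f'² = (2m+1) f f'²`,
and the identity is the fundamental theorem of calculus for this energy. -/

open Real Set Filter Topology MeasureTheory

theorem intervalIntegral.integral_eq_sub_of_hasDerivWithinAt_Icc {E : Type*}
    [NormedAddCommGroup E] [NormedSpace ℝ E] [CompleteSpace E] {g g' : ℝ → E} {a b : ℝ}
    (hab : a ≤ b) (hg : ∀ t ∈ Icc a b, HasDerivWithinAt g (g' t) (Icc a b) t)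
    (hg' : ContinuousOn g' (Icc a b)) :
    ∫ t in a..b, g' t = g b - g a :=
  integral_eq_sub_of_hasDerivAt_of_le hab (HasDerivWithinAt.continuousOn hg)
    (fun t ht => (hg t (mem_Icc_of_Ioo ht)).hasDerivAt (Icc_mem_nhds ht.1 ht.2))
    (hg'.intervalIntegrable_of_Icc hab)

noncomputable def falknerSkanEnergy (m : ℝ) (f f' f'' : ℝ → ℝ) (t : ℝ) : ℝ :=
  f t * f'' t - 1 / 2 * f' t ^ 2 + (m + 1) / 2 * (f t ^ 2 * f' t)

theorem hasDerivWithinAt_falknerSkanEnergy {m t : ℝ} {s : Set ℝ} {f f' f'' f''' : ℝ → ℝ}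
    (hf : HasDerivWithinAt f (f' t) s t) (hf' : HasDerivWithinAt f' (f'' t) s t)
    (hf'' : HasDerivWithinAt f'' (f''' t) s t)
    (hode : f''' t + (m + 1) / 2 * f t * f'' t - m * f' t ^ 2 = 0) :
    HasDerivWithinAt (falknerSkanEnergy m f f' f'') ((2 * m + 1) * (f t * f' t ^ 2)) s t := by
  have h := ((hf.mul hf'').sub ((hf'.pow 2).const_mul (1 / 2))).add
    (((hf.pow 2).mul hf').const_mul ((m + 1) / 2))
  refine h.congr_deriv ?_
  push_cast [Pi.pow_apply]
  linear_combination f t * hode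

theorem stmt7_general (m α β : ℝ) (hab : α ≤ β) (f f' f'' f''' : ℝ → ℝ)
    (hf : ∀ t ∈ Set.Icc α β, HasDerivWithinAt f (f' t) (Set.Icc α β) t)
    (hf' : ∀ t ∈ Set.Icc α β, HasDerivWithinAt f' (f'' t) (Set.Icc α β) t)
    (hf'' : ∀ t ∈ Set.Icc α β, HasDerivWithinAt f'' (f''' t) (Set.Icc α β) t)
    (hode : ∀ t ∈ Set.Icc α β,
      f''' t + (m + 1) / 2 * f t * f'' t - m * (f' t) ^ 2 = 0) :
    f β * f'' β - f α * f'' α - 1 / 2 * (f' β) ^ 2 + 1 / 2 * (f' α) ^ 2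
      + (m + 1) / 2 * ((f β) ^ 2 * f' β) - (m + 1) / 2 * ((f α) ^ 2 * f' α)
      = (2 * m + 1) * ∫ t in α..β, f t * (f' t) ^ 2 := by
  have hE : ∀ t ∈ Icc α β, HasDerivWithinAt (falknerSkanEnergy m f f' f'')
      ((2 * m + 1) * (f t * f' t ^ 2)) (Icc α β) t := fun t ht =>
    hasDerivWithinAt_falknerSkanEnergy (hf t ht) (hf' t ht) (hf'' t ht) (hode t ht)
  have hcont : ContinuousOn (fun t => (2 * m + 1) * (f t * f' t ^ 2)) (Icc α β) :=
    continuousOn_const.mul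
      ((HasDerivWithinAt.continuousOn hf).mul ((HasDerivWithinAt.continuousOn hf').pow 2))
  rw [← intervalIntegral.integral_const_mul,
    intervalIntegral.integral_eq_sub_of_hasDerivWithinAt_Icc hab hE hcont, falknerSkanEnergy,
    falknerSkanEnergy]
  ring

theorem stmt7 (m α β : ℝ) (hab : α ≤ β) (f f' f'' f''' : ℝ → ℝ)
    (hf : ∀ t ∈ Set.Icc α β, HasDerivWithinAt f (f' t) (Set.Icc α β) t)
    (hf' : ∀ t ∈ Set.Icc α β, HasDerivWithinAt f' (f'' t) (Set.Icc α β) t)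
    (hf'' : ∀ t ∈ Set.Icc α β, HasDerivWithinAt f'' (f''' t) (Set.Icc α β) t)
    (hcont : ContinuousOn f''' (Set.Icc α β))
    (hode : ∀ t ∈ Set.Icc α β,
      f''' t + (m + 1) / 2 * f t * f'' t - m * (f' t) ^ 2 = 0) :
    f β * f'' β - f α * f'' α - 1 / 2 * (f' β) ^ 2 + 1 / 2 * (f' α) ^ 2
      + (m + 1) / 2 * ((f β) ^ 2 * f' β) - (m + 1) / 2 * ((f α) ^ 2 * f' α)
      = (2 * m + 1) * ∫ t in α..β, f t * (f' t) ^ 2 :=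
  stmt7_general m α β hab f f' f'' f''' hf hf' hf'' hode
end

section
/- For m = -1, the unique solution on [0,∞) of f''' = -(f')² with f(0) = a, f'(0) = -1 and f'(t) → 0 as t → ∞, is f(t) = a - √6 + 6/(t+√6); in particular this function satisfies all the stated conditions. -/
open Real Set Filter Topology

/-!
Write `g = f'` and `h = f''`. Since `h' = -g² ≤ 0`, `h` is antitone, and because `g` converges,
`h` can neither become negative nor stay above a positive level: either would make `g` grow
linearly. So `h ≥ 0`, `h → 0`, and `g` increases from `-1` to its limit `0`. The energy
`h²/2 + g³/3` is conserved and tends to `0`, hence vanishes, which with `h ≥ 0 ≥ g` gives the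
first-order equation `g' = √(2/3) (-g)^(3/2)`. Its right-hand side is Lipschitz on `[-1, 0]`,
so `g` is its unique solution `-6/(t+√6)²` with `g 0 = -1`, and `f` follows by integration.
-/

lemma monotoneOn_Ici_of_hasDerivAt_nonneg {g g' : ℝ → ℝ} {a : ℝ}
    (hg : ∀ t ∈ Ici a, HasDerivAt g (g' t) t) (hg' : ∀ t ∈ Ici a, 0 ≤ g' t) :
    MonotoneOn g (Ici a) :=
  monotoneOn_of_hasDerivWithinAt_nonneg (convex_Ici a)
    (fun t ht => (hg t ht).continuousAt.continuousWithinAt)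
    (fun t ht => (hg t (interior_subset ht)).hasDerivWithinAt)
    (fun t ht => hg' t (interior_subset ht))

lemma antitoneOn_Ici_of_hasDerivAt_nonpos {g g' : ℝ → ℝ} {a : ℝ}
    (hg : ∀ t ∈ Ici a, HasDerivAt g (g' t) t) (hg' : ∀ t ∈ Ici a, g' t ≤ 0) :
    AntitoneOn g (Ici a) :=
  antitoneOn_of_hasDerivWithinAt_nonpos (convex_Ici a)
    (fun t ht => (hg t ht).continuousAt.continuousWithinAt)
    (fun t ht => (hg t (interior_subset ht)).hasDerivWithinAt)
    (fun t ht => hg' t (interior_subset ht))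

lemma tendsto_atTop_of_le_deriv {g g' : ℝ → ℝ} {a L : ℝ} (hL : 0 < L)
    (hg : ∀ t ∈ Ici a, HasDerivAt g (g' t) t) (hle : ∀ t ∈ Ici a, L ≤ g' t) :
    Tendsto g atTop atTop := by
  have hmono : MonotoneOn (fun t => g t - L * t) (Ici a) :=
    monotoneOn_Ici_of_hasDerivAt_nonneg (fun t ht => (hg t ht).sub ((hasDerivAt_id t).const_mul L))
      (fun t ht => by linarith [hle t ht])
  have hlin : Tendsto (fun t => L * t + (g a - L * a)) atTop atTop :=
    (tendsto_id.const_mul_atTop hL).atTop_add tendsto_const_nhds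
  refine tendsto_atTop_mono' _ ?_ hlin
  filter_upwards [eventually_ge_atTop a] with t ht
  linarith [hmono self_mem_Ici ht ht]

section AntitoneDeriv

variable {g h : ℝ → ℝ} {a l : ℝ}

lemma nonneg_of_antitoneOn_of_tendsto (hanti : AntitoneOn h (Ici a))
    (hg : ∀ t ∈ Ici a, HasDerivAt g (h t) t) (hlim : Tendsto g atTop (𝓝 l)) :
    ∀ t ∈ Ici a, 0 ≤ h t := by
  intro t₀ ht₀
  by_contra! hneg
  have hIci : Ici t₀ ⊆ Ici a := Ici_subset_Ici.2 ht₀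
  refine not_tendsto_atTop_of_tendsto_nhds hlim.neg ?_
  exact tendsto_atTop_of_le_deriv (neg_pos.2 hneg) (fun t ht => (hg t (hIci ht)).neg)
    (fun t ht => neg_le_neg (hanti ht₀ (hIci ht) ht))

lemma tendsto_zero_of_antitoneOn_of_tendsto (hanti : AntitoneOn h (Ici a))
    (hg : ∀ t ∈ Ici a, HasDerivAt g (h t) t) (hlim : Tendsto g atTop (𝓝 l)) :
    Tendsto h atTop (𝓝 0) := by
  have hnonneg := nonneg_of_antitoneOn_of_tendsto hanti hg hlim
  refine tendsto_order.2 ⟨fun ε hε => ?_, fun ε hε => ?_⟩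
  · filter_upwards [eventually_ge_atTop a] with t ht using hε.trans_le (hnonneg t ht)
  · obtain ⟨t₁, ht₁, hlt⟩ : ∃ t₁ ∈ Ici a, h t₁ < ε := by
      by_contra! hge
      exact not_tendsto_atTop_of_tendsto_nhds hlim (tendsto_atTop_of_le_deriv hε hg hge)
    filter_upwards [eventually_ge_atTop t₁] with t ht
    exact (hanti ht₁ (le_trans ht₁ ht) ht).trans_lt hlt

end AntitoneDeriv

lemma energy_eq_zero {g h : ℝ → ℝ} {a : ℝ}
    (hg : ∀ t ∈ Ici a, HasDerivAt g (h t) t) (hh : ∀ t ∈ Ici a, HasDerivAt h (-g t ^ 2) t)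
    (hg0 : Tendsto g atTop (𝓝 0)) (hh0 : Tendsto h atTop (𝓝 0)) :
    ∀ t ∈ Ici a, h t ^ 2 / 2 + g t ^ 3 / 3 = 0 := by
  set E := fun t => h t ^ 2 / 2 + g t ^ 3 / 3
  have hE : ∀ t ∈ Ici a, HasDerivAt E 0 t := fun t ht => by
    refine ((((hh t ht).fun_pow 2).div_const 2).add (((hg t ht).fun_pow 3).div_const 3)).congr_deriv ?_
    ring
  have hE0 : Tendsto E atTop (𝓝 0) := by
    simpa [E] using ((hh0.pow 2).div_const 2).add ((hg0.pow 3).div_const 3)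
  intro t ht
  have hconst : ∀ᶠ s in atTop, E s = E t := by
    filter_upwards [eventually_ge_atTop t] with s hs
    have hIcc : Icc t s ⊆ Ici a := Icc_subset_Ici_iff hs |>.2 ht
    exact constant_of_has_deriv_right_zero
      (fun x hx => (hE x (hIcc hx)).continuousAt.continuousWithinAt)
      (fun x hx => (hE x (hIcc (Ico_subset_Icc_self hx))).hasDerivWithinAt) s ⟨hs, le_rfl⟩
  exact tendsto_nhds_unique (tendsto_const_nhds.congr' (hconst.mono fun s hs => hs.symm)) hE0

lemma hasDerivAt_div_add_pow (k c : ℝ) (n : ℕ) {t : ℝ} (ht : t + c ≠ 0) :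
    HasDerivAt (fun s => k / (s + c) ^ (n + 1)) (-((n + 1) * k) / (t + c) ^ (n + 2)) t := by
  refine ((hasDerivAt_const t k).div (((hasDerivAt_id' t).add_const c).fun_pow (n + 1))
    (pow_ne_zero _ ht)).congr_deriv ?_
  rw [Nat.add_sub_cancel]; push_cast; field_simp; ring

lemma eventuallyEq_deriv_div_add_pow (k c : ℝ) (n : ℕ) {t : ℝ} (ht : -c < t) :
    deriv (fun s => k / (s + c) ^ (n + 1))
      =ᶠ[𝓝 t] fun s => -((n + 1) * k) / (s + c) ^ (n + 2) := by
  filter_upwards [Ioi_mem_nhds ht] with s hs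
  exact (hasDerivAt_div_add_pow k c n (by rw [mem_Ioi] at hs; linarith : 0 < s + c).ne').deriv

lemma sq_sqrt_six : √6 ^ 2 = 6 := sq_sqrt (by norm_num)

lemma neg_sqrt_six_lt {t : ℝ} (ht : 0 ≤ t) : -√6 < t := by
  linarith [sqrt_pos.2 (by norm_num : (0 : ℝ) < 6)]

lemma explicitSol_zero (a : ℝ) : a - √6 + 6 / (0 + √6) = a := by
  rw [zero_add, div_sqrt]; ring

lemma hasDerivAt_explicitSol (a : ℝ) {t : ℝ} (ht : -√6 < t) :
    HasDerivAt (fun s => a - √6 + 6 / (s + √6)) (-6 / (t + √6) ^ 2) t := by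
  simpa using (hasDerivAt_div_add_pow 6 (√6) 0 (by linarith : 0 < t + √6).ne').const_add (a - √6)

lemma deriv_explicitSol_eventuallyEq (a : ℝ) {t : ℝ} (ht : -√6 < t) :
    deriv (fun s => a - √6 + 6 / (s + √6)) =ᶠ[𝓝 t] fun s => -6 / (s + √6) ^ 2 := by
  filter_upwards [Ioi_mem_nhds ht] with s hs
  exact (hasDerivAt_explicitSol a hs).deriv

lemma deriv_deriv_explicitSol_eventuallyEq (a : ℝ) {t : ℝ} (ht : -√6 < t) :
    deriv (deriv fun s => a - √6 + 6 / (s + √6)) =ᶠ[𝓝 t] fun s => 12 / (s + √6) ^ 3 := by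
  refine (deriv_explicitSol_eventuallyEq a ht).deriv.trans ?_
  convert eventuallyEq_deriv_div_add_pow (-6) (√6) 1 ht using 3; norm_num

lemma deriv_deriv_deriv_explicitSol (a : ℝ) {t : ℝ} (ht : -√6 < t) :
    deriv (deriv (deriv fun s => a - √6 + 6 / (s + √6))) t = -36 / (t + √6) ^ 4 := by
  rw [(deriv_deriv_explicitSol_eventuallyEq a ht).deriv_eq]
  convert (eventuallyEq_deriv_div_add_pow 12 (√6) 2 ht).eq_of_nhds using 2; norm_num

lemma tendsto_deriv_explicitSol (a : ℝ) :
    Tendsto (deriv fun s => a - √6 + 6 / (s + √6)) atTop (𝓝 0) := by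
  have hsq : Tendsto (fun t : ℝ => (t + √6) ^ 2) atTop atTop :=
    (tendsto_pow_atTop two_ne_zero).comp (tendsto_atTop_add_const_right _ _ tendsto_id)
  refine ((tendsto_const_nhds (x := (-6 : ℝ))).div_atTop hsq).congr' ?_
  filter_upwards [eventually_gt_atTop (-√6)] with t ht
  exact (deriv_explicitSol_eventuallyEq a ht).eq_of_nhds.symm

noncomputable def reducedField (x : ℝ) : ℝ := √(2 / 3) * (-x * √(-x))

lemma abs_pow_three_sub_le {u v : ℝ} (hu : u ∈ Icc (0 : ℝ) 1) (hv : v ∈ Icc (0 : ℝ) 1) :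
    |u ^ 3 - v ^ 3| ≤ 2 * |u ^ 2 - v ^ 2| := by
  obtain ⟨hu0, hu1⟩ := hu
  obtain ⟨hv0, hv1⟩ := hv
  have hsum : u ^ 2 + u * v + v ^ 2 ≤ 2 * (u + v) := by nlinarith
  calc |u ^ 3 - v ^ 3| = |u - v| * (u ^ 2 + u * v + v ^ 2) := by
        rw [← abs_of_nonneg (by positivity : 0 ≤ u ^ 2 + u * v + v ^ 2), ← abs_mul]; ring_nf
    _ ≤ |u - v| * (2 * (u + v)) := by gcongr
    _ = 2 * |u ^ 2 - v ^ 2| := by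
        rw [← abs_of_nonneg (by positivity : 0 ≤ u + v), mul_left_comm, ← abs_mul]; ring_nf

lemma lipschitzOnWith_reducedField : LipschitzOnWith 2 reducedField (Icc (-1) 0) := by
  refine LipschitzOnWith.of_dist_le_mul fun x hx y hy => ?_
  have hmem : ∀ z ∈ Icc (-1 : ℝ) 0,
      √(-z) ∈ Icc (0 : ℝ) 1 ∧ -z = √(-z) ^ 2 ∧ -z * √(-z) = √(-z) ^ 3 := fun z hz => by
    have hsq : -z = √(-z) ^ 2 := (sq_sqrt (by linarith [hz.2])).symm
    refine ⟨⟨sqrt_nonneg _, sqrt_le_one.2 (by linarith [hz.1])⟩, hsq, ?_⟩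
    rw [pow_succ, ← hsq]
  obtain ⟨hu, hxu, hxu'⟩ := hmem x hx
  obtain ⟨hv, hyv, hyv'⟩ := hmem y hy
  have hc : |√(2 / 3)| ≤ 1 := by
    rw [abs_of_nonneg (sqrt_nonneg _)]; exact sqrt_le_one.2 (by norm_num)
  have hdist : dist x y = |√(-x) ^ 2 - √(-y) ^ 2| := by
    rw [Real.dist_eq, ← hxu, ← hyv, abs_sub_comm]; ring_nf
  calc dist (reducedField x) (reducedField y)
      = |√(2 / 3)| * |√(-x) ^ 3 - √(-y) ^ 3| := by
        rw [Real.dist_eq, reducedField, reducedField, ← mul_sub, abs_mul, hxu', hyv']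
    _ ≤ 1 * (2 * |√(-x) ^ 2 - √(-y) ^ 2|) := by
        gcongr
        exact abs_pow_three_sub_le hu hv
    _ = 2 * dist x y := by rw [hdist]; ring

lemma eq_reducedField_of_energy_eq_zero {x y : ℝ} (hx : x ≤ 0) (hy : 0 ≤ y)
    (hE : y ^ 2 / 2 + x ^ 3 / 3 = 0) : y = reducedField x := by
  have hx' : 0 ≤ -x := by linarith
  refine (sq_eq_sq₀ hy (by unfold reducedField; positivity)).1 ?_
  rw [reducedField, mul_pow, mul_pow, sq_sqrt (by norm_num), sq_sqrt hx']
  linarith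

lemma explicitDeriv_mem_Icc {t : ℝ} (ht : 0 ≤ t) : -6 / (t + √6) ^ 2 ∈ Icc (-1 : ℝ) 0 := by
  have h6 : 6 ≤ (t + √6) ^ 2 := by nlinarith [sqrt_nonneg 6, sq_sqrt_six]
  refine ⟨?_, div_nonpos_of_nonpos_of_nonneg (by norm_num) (by positivity)⟩
  rw [le_div_iff₀ (by linarith)]
  linarith

lemma hasDerivAt_explicitDeriv {t : ℝ} (ht : 0 ≤ t) :
    HasDerivAt (fun s => -6 / (s + √6) ^ 2) (reducedField (-6 / (t + √6) ^ 2)) t := by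
  have hpos : 0 < t + √6 := by positivity
  have hsqrt : √(2 / 3) * √6 = 2 := by
    rw [← sqrt_mul (by norm_num), show (2 / 3 * 6 : ℝ) = 2 ^ 2 by norm_num, sqrt_sq (by norm_num)]
  have hval : reducedField (-6 / (t + √6) ^ 2) = 12 / (t + √6) ^ 3 := by
    rw [reducedField, neg_div, neg_neg, sqrt_div (by norm_num : (0 : ℝ) ≤ 6), sqrt_sq hpos.le]
    field_simp
    linear_combination (6 : ℝ) * hsqrt
  rw [hval]
  convert hasDerivAt_div_add_pow (-6) (√6) 1 hpos.ne' using 1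
  norm_num

lemma eq_explicitDeriv_of_hasDerivAt_reducedField {g : ℝ → ℝ}
    (hg : ∀ t ∈ Ici (0 : ℝ), HasDerivAt g (reducedField (g t)) t)
    (hmem : ∀ t ∈ Ici (0 : ℝ), g t ∈ Icc (-1) 0) (h0 : g 0 = -1) :
    ∀ t ∈ Ici (0 : ℝ), g t = -6 / (t + √6) ^ 2 := fun t ht =>
  ODE_solution_unique_of_mem_Icc_right (v := fun _ => reducedField) (s := fun _ => Icc (-1) 0)
    (fun _ _ => lipschitzOnWith_reducedField)
    (fun s hs => (hg s hs.1).continuousAt.continuousWithinAt)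
    (fun s hs => (hg s hs.1).hasDerivWithinAt) (fun s hs => hmem s hs.1)
    (fun s hs => (hasDerivAt_explicitDeriv hs.1).continuousAt.continuousWithinAt)
    (fun s hs => (hasDerivAt_explicitDeriv hs.1).hasDerivWithinAt)
    (fun s hs => explicitDeriv_mem_Icc hs.1)
    (by rw [h0, zero_add, sq_sqrt_six]; norm_num) ⟨ht, le_rfl⟩

lemma deriv_eq_explicitDeriv {f : ℝ → ℝ}
    (hd2 : ∀ t ∈ Ici (0 : ℝ), DifferentiableAt ℝ (deriv f) t)
    (hd3 : ∀ t ∈ Ici (0 : ℝ), DifferentiableAt ℝ (deriv (deriv f)) t)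
    (hode : ∀ t ∈ Ici (0 : ℝ), deriv (deriv (deriv f)) t = -(deriv f t) ^ 2)
    (hf'0 : deriv f 0 = -1) (hlim : Tendsto (deriv f) atTop (𝓝 0)) :
    ∀ t ∈ Ici (0 : ℝ), deriv f t = -6 / (t + √6) ^ 2 := by
  set g := deriv f
  set h := deriv g
  have hg : ∀ t ∈ Ici (0 : ℝ), HasDerivAt g (h t) t := fun t ht => (hd2 t ht).hasDerivAt
  have hh : ∀ t ∈ Ici (0 : ℝ), HasDerivAt h (-g t ^ 2) t :=
    fun t ht => hode t ht ▸ (hd3 t ht).hasDerivAt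
  have hanti : AntitoneOn h (Ici 0) :=
    antitoneOn_Ici_of_hasDerivAt_nonpos hh fun t _ => neg_nonpos.2 (sq_nonneg _)
  have hh_nonneg := nonneg_of_antitoneOn_of_tendsto hanti hg hlim
  have hE := energy_eq_zero hg hh hlim (tendsto_zero_of_antitoneOn_of_tendsto hanti hg hlim)
  have hmono : MonotoneOn g (Ici 0) := monotoneOn_Ici_of_hasDerivAt_nonneg hg hh_nonneg
  have hmem : ∀ t ∈ Ici (0 : ℝ), g t ∈ Icc (-1) 0 := fun t ht =>
    ⟨hf'0 ▸ hmono self_mem_Ici ht ht,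
      ge_of_tendsto hlim ((eventually_ge_atTop t).mono fun s hs => hmono ht (le_trans ht hs) hs)⟩
  refine eq_explicitDeriv_of_hasDerivAt_reducedField (fun t ht => ?_) hmem hf'0
  rw [← eq_reducedField_of_energy_eq_zero (hmem t ht).2 (hh_nonneg t ht) (hE t ht)]
  exact hg t ht

lemma eq_explicitSol {f : ℝ → ℝ} {a : ℝ} (hd1 : ∀ t ∈ Ici (0 : ℝ), DifferentiableAt ℝ f t)
    (hf' : ∀ t ∈ Ici (0 : ℝ), deriv f t = -6 / (t + √6) ^ 2) (hf0 : f 0 = a) :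
    ∀ t ∈ Ici (0 : ℝ), f t = a - √6 + 6 / (t + √6) := by
  have hF : ∀ t ∈ Ici (0 : ℝ), HasDerivAt (fun s => a - √6 + 6 / (s + √6)) (-6 / (t + √6) ^ 2) t :=
    fun t ht => hasDerivAt_explicitSol a (neg_sqrt_six_lt ht)
  intro t ht
  refine eq_of_has_deriv_right_eq (f' := fun s => -6 / (s + √6) ^ 2)
    (fun s hs => hf' s hs.1 ▸ (hd1 s hs.1).hasDerivAt.hasDerivWithinAt)
    (fun s hs => (hF s hs.1).hasDerivWithinAt)
    (fun s hs => (hd1 s hs.1).continuousAt.continuousWithinAt)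
    (fun s hs => (hF s hs.1).continuousAt.continuousWithinAt)
    (by rw [hf0, explicitSol_zero]) t ⟨ht, le_rfl⟩

theorem stmt10 (a : ℝ) :
    (∀ t ∈ Set.Ici (0:ℝ),
        deriv (deriv (deriv (fun s => a - Real.sqrt 6 + 6 / (s + Real.sqrt 6)))) t
          = -(deriv (fun s => a - Real.sqrt 6 + 6 / (s + Real.sqrt 6)) t) ^ 2)
    ∧ (a - Real.sqrt 6 + 6 / (0 + Real.sqrt 6) = a)
    ∧ deriv (fun s => a - Real.sqrt 6 + 6 / (s + Real.sqrt 6)) 0 = -1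
    ∧ Filter.Tendsto (deriv (fun s => a - Real.sqrt 6 + 6 / (s + Real.sqrt 6)))
        Filter.atTop (nhds 0)
    ∧ ∀ f : ℝ → ℝ,
        (∀ t ∈ Set.Ici (0:ℝ), DifferentiableAt ℝ f t) →
        (∀ t ∈ Set.Ici (0:ℝ), DifferentiableAt ℝ (deriv f) t) →
        (∀ t ∈ Set.Ici (0:ℝ), DifferentiableAt ℝ (deriv (deriv f)) t) →
        (∀ t ∈ Set.Ici (0:ℝ),
          deriv (deriv (deriv f)) t = -(deriv f t) ^ 2) →
        f 0 = a → deriv f 0 = -1 →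
        Filter.Tendsto (deriv f) Filter.atTop (nhds 0) →
        ∀ t ∈ Set.Ici (0:ℝ), f t = a - Real.sqrt 6 + 6 / (t + Real.sqrt 6) := by
  have hF' : ∀ t ∈ Ici (0 : ℝ), deriv (fun s => a - √6 + 6 / (s + √6)) t = -6 / (t + √6) ^ 2 :=
    fun t ht => (hasDerivAt_explicitSol a (neg_sqrt_six_lt ht)).deriv
  refine ⟨fun t ht => ?_, explicitSol_zero a, ?_, tendsto_deriv_explicitSol a,
    fun f hd1 hd2 hd3 hode hf0 hf'0 hlim =>
      eq_explicitSol hd1 (deriv_eq_explicitDeriv hd2 hd3 hode hf'0 hlim) hf0⟩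
  · have hpos : t + √6 ≠ 0 := (by linarith [neg_sqrt_six_lt ht] : 0 < t + √6).ne'
    rw [deriv_deriv_deriv_explicitSol a (neg_sqrt_six_lt ht), hF' t ht]
    field_simp
    ring
  · rw [hF' 0 self_mem_Ici, zero_add, sq_sqrt_six]
    norm_num
end

section
/- Under the change of variables s = ∫_0^t f(ξ)dξ, u(s) = f'(t)/f(t)², v(s) = f''(t)/f(t)³ (valid on a maximal interval [0,T) where f does not vanish), a solution f of f''' + ((m+1)/2) f f'' - m (f')² = 0 gives rise to a solution of the planar system u̇ = v - 2u², v̇ = -((m+1)/2) v + m u² - 3uv, where the dot denotes d/ds. -/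
open Real Set Filter Topology MeasureTheory

theorem stmt13 (m T : ℝ) (hT : 0 < T) (f f' f'' f''' : ℝ → ℝ)
    (hf : ∀ t ∈ Set.Ico 0 T, HasDerivWithinAt f (f' t) (Set.Ico 0 T) t)
    (hf' : ∀ t ∈ Set.Ico 0 T, HasDerivWithinAt f' (f'' t) (Set.Ico 0 T) t)
    (hf'' : ∀ t ∈ Set.Ico 0 T, HasDerivWithinAt f'' (f''' t) (Set.Ico 0 T) t)
    (hne : ∀ t ∈ Set.Ico 0 T, f t ≠ 0)
    (hode : ∀ t ∈ Set.Ico 0 T,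
      f''' t + (m + 1) / 2 * f t * f'' t - m * (f' t) ^ 2 = 0)
    (u v : ℝ → ℝ)
    (hu : ∀ t ∈ Set.Ico 0 T, u t = f' t / (f t) ^ 2)
    (hv : ∀ t ∈ Set.Ico 0 T, v t = f'' t / (f t) ^ 3) :
    ∀ t ∈ Set.Ico 0 T,
      HasDerivWithinAt u ((v t - 2 * (u t) ^ 2) * f t) (Set.Ico 0 T) t ∧
      HasDerivWithinAt v
        ((-((m + 1) / 2) * v t + m * (u t) ^ 2 - 3 * u t * v t) * f t)
        (Set.Ico 0 T) t := by
  intro t ht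
  have hne2 : (f t) ^ 2 ≠ 0 := pow_ne_zero 2 (hne t ht)
  have hne3 : (f t) ^ 3 ≠ 0 := pow_ne_zero 3 (hne t ht)
  have hpow2 : HasDerivWithinAt (fun x => (f x) ^ 2)
      (2 * (f t) ^ 1 * f' t) (Set.Ico 0 T) t := (hf t ht).pow 2
  have hpow3 : HasDerivWithinAt (fun x => (f x) ^ 3)
      (3 * (f t) ^ 2 * f' t) (Set.Ico 0 T) t := (hf t ht).pow 3
  have hud : HasDerivWithinAt (fun x => f' x / (f x) ^ 2)
      ((f'' t * (f t) ^ 2 - f' t * (2 * (f t) ^ 1 * f' t)) / ((f t) ^ 2) ^ 2)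
      (Set.Ico 0 T) t := (hf' t ht).div hpow2 hne2
  have hvd : HasDerivWithinAt (fun x => f'' x / (f x) ^ 3)
      ((f''' t * (f t) ^ 3 - f'' t * (3 * (f t) ^ 2 * f' t)) / ((f t) ^ 3) ^ 2)
      (Set.Ico 0 T) t := (hf'' t ht).div hpow3 hne3
  have hf3 : f''' t = -((m + 1) / 2 * f t * f'' t) + m * (f' t) ^ 2 := by
    have := hode t ht; linarith
  constructor
  · refine (hud.congr hu (hu t ht)).congr_deriv ?_
    rw [hu t ht, hv t ht]
    field_simp
  · refine (hvd.congr hv (hv t ht)).congr_deriv ?_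
    rw [hu t ht, hv t ht, hf3]
    field_simp
end

section
/- For m = -1/3 and a > √6, the function f(t) = √(a²-6) · [ (a+√(a²-6)) e^{t√(a²-6)/6} + (a-√(a²-6)) e^{-t√(a²-6)/6} ] / [ (a+√(a²-6)) e^{t√(a²-6)/6} - (a-√(a²-6)) e^{-t√(a²-6)/6} ] is defined for all t ≥ 0 (the denominator never vanishes), satisfies f(0) = a, f'(0) = -1, f'(t) → 0 as t → ∞, and solves f' + (1/6)f² = -1 + a²/6 on [0,∞); consequently it solves f''' + (1/3) f f'' + (1/3)(f')² = 0 with the boundary conditions of the problem. -/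
open Real Set Filter Topology

/-! Write `f = c N / D` with `N = (a + c) e^{tc/6} + (a - c) e^{-tc/6}` and `D` the same with a
minus sign. Then `N' = (c/6) D` and `D' = (c/6) N`, so `f' = (c² - f²) / 6`, which is the Riccati
equation because `c² = a² - 6`; differentiating it twice gives the third-order equation. For
`t ≥ 0` one has `D ≥ (a + c) - (a - c) = 2c > 0`. Dividing `N` and `D` by `e^{tc/6}` leaves only the
decaying mode `e^{-tc/3}`, so `f → c` and hence `f' = (c² - f²) / 6 → 0`. -/

section Riccati

variable {f : ℝ → ℝ} {U : Set ℝ} {K : ℝ}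

lemma deriv_eventuallyEq_of_hasDerivAt_riccati (hU : IsOpen U)
    (hf : ∀ t ∈ U, HasDerivAt f (K - f t ^ 2 / 6) t) {t : ℝ} (ht : t ∈ U) :
    deriv f =ᶠ[𝓝 t] fun s => K - f s ^ 2 / 6 := by
  filter_upwards [hU.mem_nhds ht] with s hs using (hf s hs).deriv

lemma hasDerivAt_deriv_of_hasDerivAt_riccati (hU : IsOpen U)
    (hf : ∀ t ∈ U, HasDerivAt f (K - f t ^ 2 / 6) t) {t : ℝ} (ht : t ∈ U) :
    HasDerivAt (deriv f) (-(f t * deriv f t) / 3) t := by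
  refine ((((hf t ht).fun_pow 2).div_const 6).const_sub K).congr_of_eventuallyEq
    (deriv_eventuallyEq_of_hasDerivAt_riccati hU hf ht) |>.congr_deriv ?_
  rw [(hf t ht).deriv]
  norm_num
  ring

theorem deriv_deriv_deriv_add_of_hasDerivAt_riccati (hU : IsOpen U)
    (hf : ∀ t ∈ U, HasDerivAt f (K - f t ^ 2 / 6) t) {t : ℝ} (ht : t ∈ U) :
    deriv (deriv (deriv f)) t + 1 / 3 * f t * deriv (deriv f) t + 1 / 3 * deriv f t ^ 2 = 0 := by
  have hf' : HasDerivAt f (deriv f t) t := (hf t ht).differentiableAt.hasDerivAt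
  have hf'' := hasDerivAt_deriv_of_hasDerivAt_riccati hU hf ht
  have h2 : deriv (deriv f) =ᶠ[𝓝 t] fun s => -(f s * deriv f s) / 3 := by
    filter_upwards [hU.mem_nhds ht] with s hs
    exact (hasDerivAt_deriv_of_hasDerivAt_riccati hU hf hs).deriv
  rw [((hf'.fun_mul hf'').neg.div_const 3).congr_of_eventuallyEq h2 |>.deriv, hf''.deriv]
  ring

end Riccati

section ExplicitSolution

variable (a c : ℝ)

noncomputable def riccatiNum (t : ℝ) : ℝ :=
  (a + c) * exp (t * c / 6) + (a - c) * exp (-(t * c / 6))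

noncomputable def riccatiDen (t : ℝ) : ℝ :=
  (a + c) * exp (t * c / 6) - (a - c) * exp (-(t * c / 6))

noncomputable def riccatiSol (t : ℝ) : ℝ :=
  c * riccatiNum a c t / riccatiDen a c t

lemma hasDerivAt_exp_mul_div_six (t : ℝ) :
    HasDerivAt (fun s => exp (s * c / 6)) (c / 6 * exp (t * c / 6)) t := by
  simpa [mul_comm] using (((hasDerivAt_id t).mul_const c).div_const 6).exp

lemma hasDerivAt_exp_neg_mul_div_six (t : ℝ) :
    HasDerivAt (fun s => exp (-(s * c / 6))) (-(c / 6) * exp (-(t * c / 6))) t := by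
  simpa [mul_comm] using (((hasDerivAt_id t).mul_const c).div_const 6).neg.exp

lemma hasDerivAt_riccatiNum (t : ℝ) :
    HasDerivAt (riccatiNum a c) (c / 6 * riccatiDen a c t) t :=
  ((hasDerivAt_exp_mul_div_six c t).const_mul (a + c)).add
    ((hasDerivAt_exp_neg_mul_div_six c t).const_mul (a - c)) |>.congr_deriv
    (by simp only [riccatiDen]; ring)

lemma hasDerivAt_riccatiDen (t : ℝ) :
    HasDerivAt (riccatiDen a c) (c / 6 * riccatiNum a c t) t :=
  ((hasDerivAt_exp_mul_div_six c t).const_mul (a + c)).sub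
    ((hasDerivAt_exp_neg_mul_div_six c t).const_mul (a - c)) |>.congr_deriv
    (by simp only [riccatiNum]; ring)

lemma hasDerivAt_riccatiSol {t : ℝ} (ht : riccatiDen a c t ≠ 0) :
    HasDerivAt (riccatiSol a c) (c ^ 2 / 6 - riccatiSol a c t ^ 2 / 6) t :=
  ((hasDerivAt_riccatiNum a c t).const_mul c).fun_div (hasDerivAt_riccatiDen a c t) ht
    |>.congr_deriv (by simp only [riccatiSol]; field_simp)

lemma continuous_riccatiDen : Continuous (riccatiDen a c) := by
  unfold riccatiDen
  fun_prop

variable {a c}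

lemma riccatiSol_zero (hc : c ≠ 0) : riccatiSol a c 0 = a := by
  simp only [riccatiSol, riccatiNum, riccatiDen, zero_mul, zero_div, neg_zero, exp_zero, mul_one]
  rw [show a + c + (a - c) = 2 * a by ring, show a + c - (a - c) = 2 * c by ring]
  field_simp

lemma riccatiDen_pos (hc : 0 < c) (hca : c ≤ a) {t : ℝ} (ht : 0 ≤ t) : 0 < riccatiDen a c t := by
  have h1 : exp (-(t * c / 6)) ≤ 1 := exp_le_one_iff.mpr (by nlinarith)
  have h2 : 1 ≤ exp (t * c / 6) := one_le_exp (by positivity)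
  calc 0 < (a + c) * 1 - (a - c) * 1 := by linarith
    _ ≤ (a + c) * exp (t * c / 6) - (a - c) * exp (-(t * c / 6)) := by
      gcongr; linarith
    _ = riccatiDen a c t := rfl

lemma riccatiSol_eq (t : ℝ) :
    riccatiSol a c t =
      c * ((a + c) + (a - c) * exp (-(t * c / 3))) / ((a + c) - (a - c) * exp (-(t * c / 3))) := by
  have hsplit : exp (-(t * c / 6)) = exp (t * c / 6) * exp (-(t * c / 3)) := by
    rw [← exp_add]; ring_nf
  calc riccatiSol a c t
      = exp (t * c / 6) * (c * ((a + c) + (a - c) * exp (-(t * c / 3))))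
        / (exp (t * c / 6) * ((a + c) - (a - c) * exp (-(t * c / 3)))) := by
        rw [riccatiSol, riccatiNum, riccatiDen, hsplit]
        congr 1 <;> ring
    _ = _ := mul_div_mul_left _ _ (exp_ne_zero _)

lemma tendsto_riccatiSol (hc : 0 < c) (hac : a + c ≠ 0) :
    Tendsto (riccatiSol a c) atTop (𝓝 c) := by
  have hE : Tendsto (fun t => exp (-(t * c / 3))) atTop (𝓝 0) :=
    tendsto_exp_atBot.comp
      (tendsto_neg_atTop_atBot.comp ((tendsto_id.atTop_mul_const hc).atTop_div_const three_pos))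
  have hlim := (((hE.const_mul (a - c)).const_add (a + c)).const_mul c).div
    ((hE.const_mul (a - c)).const_sub (a + c)) (by simpa using hac)
  rw [show c * (a + c + (a - c) * 0) / (a + c - (a - c) * 0) = c by simp [hac]] at hlim
  exact hlim.congr fun t => (riccatiSol_eq t).symm

end ExplicitSolution

theorem stmt19 (a : ℝ) (ha : Real.sqrt 6 < a) :
    let c := Real.sqrt (a ^ 2 - 6)
    let f : ℝ → ℝ := fun t =>
      c * ((a + c) * Real.exp (t * c / 6) + (a - c) * Real.exp (-(t * c / 6)))
        / ((a + c) * Real.exp (t * c / 6) - (a - c) * Real.exp (-(t * c / 6)))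
    (∀ t ∈ Set.Ici (0:ℝ),
        (a + c) * Real.exp (t * c / 6) - (a - c) * Real.exp (-(t * c / 6)) ≠ 0)
    ∧ f 0 = a
    ∧ deriv f 0 = -1
    ∧ Filter.Tendsto (deriv f) Filter.atTop (nhds 0)
    ∧ (∀ t ∈ Set.Ici (0:ℝ), deriv f t + 1 / 6 * (f t) ^ 2 = -1 + a ^ 2 / 6)
    ∧ ∀ t ∈ Set.Ici (0:ℝ),
        deriv (deriv (deriv f)) t + 1 / 3 * f t * deriv (deriv f) t
          + 1 / 3 * (deriv f t) ^ 2 = 0 := by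
  intro c f
  have ha6 : 6 < a ^ 2 := by
    nlinarith [sq_sqrt (show (0:ℝ) ≤ 6 by norm_num), sqrt_nonneg 6]
  have hc2 : c ^ 2 = a ^ 2 - 6 := sq_sqrt (by linarith)
  have hc : 0 < c := sqrt_pos.mpr (by linarith)
  have hca : c ≤ a := by nlinarith [sqrt_nonneg 6]
  set U : Set ℝ := {t | 0 < riccatiDen a c t}
  have hU : IsOpen U := isOpen_lt continuous_const (continuous_riccatiDen a c)
  have hIci : Ici 0 ⊆ U := fun t ht => riccatiDen_pos hc hca ht
  have hf : ∀ t ∈ U, HasDerivAt f (c ^ 2 / 6 - f t ^ 2 / 6) t :=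
    fun t ht => hasDerivAt_riccatiSol a c (ne_of_gt ht)
  have hf0 : f 0 = a := riccatiSol_zero hc.ne'
  have hriccati : ∀ t ∈ Ici (0:ℝ), deriv f t + 1 / 6 * f t ^ 2 = -1 + a ^ 2 / 6 := by
    intro t ht
    rw [(hf t (hIci ht)).deriv, hc2]
    ring
  refine ⟨fun t ht => (riccatiDen_pos hc hca ht).ne', hf0, ?_, ?_, hriccati,
    fun t ht => deriv_deriv_deriv_add_of_hasDerivAt_riccati hU hf (hIci ht)⟩
  · linarith [hf0 ▸ hriccati 0 self_mem_Ici]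
  · have hlim := ((tendsto_riccatiSol hc (show 0 < a + c by linarith).ne').pow 2).div_const 6
      |>.const_sub (c ^ 2 / 6)
    rw [sub_self] at hlim
    refine hlim.congr' ?_
    filter_upwards [eventually_ge_atTop 0] with t ht using ((hf t (hIci ht)).deriv).symm
end
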